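/- arXiv:2110.10545 — 4 statements merged into one kernel-verified Lean document; each statement's English description precedes it below -/
import Mathlib

section
/- Let F = UΣVᵀ be the SVD of F ∈ ℝ^{n×D}, α, β > 0, A = αI_D + βFᵀF, m = βA⁻¹Fᵀy, z = Uᵀy. Then ‖Fm - y‖₂² = Σ_{i=1}^{n} α²zᵢ² / (α + βσᵢ²)², where σᵢ = 0 for i > min(n,D) or beyond the rank of F. -/
open Matrix

theorem residual_eq_sum_svd (n D : ℕ) (F : Matrix (Fin n) (Fin D) ℝ)
    (U : Matrix (Fin n) (Fin n) ℝ) (V : Matrix (Fin D) (Fin D) ℝ) (σ : ℕ → ℝ)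
    (hU : Uᵀ * U = 1) (hV : Vᵀ * V = 1) (hσ : ∀ i, 0 ≤ σ i)
    (hσ0 : ∀ i, min n D ≤ i → σ i = 0)
    (hF : F = U * (Matrix.of fun (i : Fin n) (j : Fin D) =>
      if (i : ℕ) = (j : ℕ) then σ i else 0) * Vᵀ)
    (y : Fin n → ℝ) (α β : ℝ) (hα : 0 < α) (hβ : 0 < β) :
    let A := α • (1 : Matrix (Fin D) (Fin D) ℝ) + β • (Fᵀ * F)
    let m := β • (A⁻¹ *ᵥ (Fᵀ *ᵥ y))
    let z := Uᵀ *ᵥ y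
    (F *ᵥ m - y) ⬝ᵥ (F *ᵥ m - y) = ∑ i : Fin n,
      α ^ 2 * z i ^ 2 / (α + β * σ (i : ℕ) ^ 2) ^ 2 := by
  intro A m z
  set S : Matrix (Fin n) (Fin D) ℝ :=
    Matrix.of fun (i : Fin n) (j : Fin D) =>
      if (i : ℕ) = (j : ℕ) then σ i else 0 with hSdef
  have hUU : U * Uᵀ = 1 := mul_eq_one_comm.mp hU
  have hVV : V * Vᵀ = 1 := mul_eq_one_comm.mp hV
  have hpos : ∀ k : ℕ, 0 < α + β * σ k ^ 2 := fun k =>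
    add_pos_of_pos_of_nonneg hα (mul_nonneg hβ.le (sq_nonneg _))
  have hne : ∀ k : ℕ, α + β * σ k ^ 2 ≠ 0 := fun k => (hpos k).ne'
  have hσn : ∀ j : Fin D, n ≤ (j : ℕ) → σ (j : ℕ) = 0 := fun j h =>
    hσ0 _ (le_trans (min_le_left n D) h)
  have hσD : ∀ i : Fin n, D ≤ (i : ℕ) → σ (i : ℕ) = 0 := fun i h =>
    hσ0 _ (le_trans (min_le_right n D) h)
  -- Σᵀ Σ = diag (σ²)  on Fin D
  have hStS : Sᵀ * S = diagonal (fun j : Fin D => σ (j : ℕ) ^ 2) := by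
    ext j k
    simp only [Matrix.mul_apply, transpose_apply, hSdef, of_apply, diagonal_apply]
    by_cases hjk : j = k
    · subst hjk
      by_cases hj : (j : ℕ) < n
      · rw [Finset.sum_eq_single (⟨(j : ℕ), hj⟩ : Fin n)]
        · simp [sq]
        · intro i _ hi
          have : (i : ℕ) ≠ (j : ℕ) := fun h => hi (Fin.ext h)
          simp [this]
        · simp
      · have h0 : σ (j : ℕ) = 0 := hσn j (le_of_not_gt hj)
        rw [Finset.sum_eq_zero]
        · simp [h0]
        · intro i _
          have : (i : ℕ) ≠ (j : ℕ) := by omega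
          simp [this]
    · rw [Finset.sum_eq_zero]
      · simp [hjk]
      · intro i _
        by_cases h1 : (i : ℕ) = (j : ℕ)
        · have h2 : (i : ℕ) ≠ (k : ℕ) := by
            intro h2; exact hjk (Fin.ext (h1 ▸ h2))
          simp [h2]
        · simp [h1]
  -- Σ diag(d) Σᵀ = diag (σ² d) on Fin n
  have hSdS : ∀ d : ℕ → ℝ, S * diagonal (fun j : Fin D => d (j : ℕ)) * Sᵀ
      = diagonal (fun i : Fin n => σ (i : ℕ) ^ 2 * d (i : ℕ)) := by
    intro d
    ext i k
    simp only [Matrix.mul_apply, Matrix.mul_diagonal, transpose_apply, hSdef, of_apply,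
      diagonal_apply]
    by_cases hik : i = k
    · subst hik
      by_cases hi : (i : ℕ) < D
      · rw [Finset.sum_eq_single (⟨(i : ℕ), hi⟩ : Fin D)]
        · simp [sq]; ring
        · intro j _ hj
          have : (i : ℕ) ≠ (j : ℕ) := fun h => hj (Fin.ext h.symm)
          simp [this]
        · simp
      · have h0 : σ (i : ℕ) = 0 := hσD i (le_of_not_gt hi)
        rw [Finset.sum_eq_zero]
        · simp [h0]
        · intro j _
          have : (i : ℕ) ≠ (j : ℕ) := by omega
          simp [this]
    · rw [Finset.sum_eq_zero]
      · simp [hik]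
      · intro j _
        by_cases h1 : (i : ℕ) = (j : ℕ)
        · have h2 : (k : ℕ) ≠ (j : ℕ) := by
            intro h2; exact hik (Fin.ext (h1.trans h2.symm))
          simp [h2]
        · simp [h1]
  have hUc : ∀ (p : ℕ) (X : Matrix (Fin n) (Fin p) ℝ), Uᵀ * (U * X) = X := fun p X => by
    rw [← Matrix.mul_assoc, hU, Matrix.one_mul]
  have hVc : ∀ (p : ℕ) (X : Matrix (Fin D) (Fin p) ℝ), Vᵀ * (V * X) = X := fun p X => by
    rw [← Matrix.mul_assoc, hV, Matrix.one_mul]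
  -- Fᵀ F
  have hFtF : Fᵀ * F = V * diagonal (fun j : Fin D => σ (j : ℕ) ^ 2) * Vᵀ := by
    rw [hF]
    simp only [transpose_mul, transpose_transpose, Matrix.mul_assoc]
    rw [hUc _ _, ← Matrix.mul_assoc Sᵀ S, hStS]
  -- A as V diag Vᵀ
  have hdiagA : α • (1 : Matrix (Fin D) (Fin D) ℝ)
      + β • diagonal (fun j : Fin D => σ (j : ℕ) ^ 2)
      = diagonal (fun j : Fin D => α + β * σ (j : ℕ) ^ 2) := by
    ext i j
    by_cases h : i = j <;> simp [diagonal_apply, h, Matrix.one_apply]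
  have hA : A = V * diagonal (fun j : Fin D => α + β * σ (j : ℕ) ^ 2) * Vᵀ := by
    show α • (1 : Matrix (Fin D) (Fin D) ℝ) + β • (Fᵀ * F) = _
    rw [hFtF, ← hdiagA]
    simp only [Matrix.mul_add, Matrix.add_mul, Matrix.mul_smul, Matrix.smul_mul,
      Matrix.mul_one, hVV]
  have hAinv : A⁻¹ = V * diagonal (fun j : Fin D => (α + β * σ (j : ℕ) ^ 2)⁻¹) * Vᵀ := by
    apply Matrix.inv_eq_right_inv
    rw [hA]
    simp only [Matrix.mul_assoc]
    rw [hVc _ _, ← Matrix.mul_assoc (diagonal _) (diagonal _), diagonal_mul_diagonal]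
    have h2 : (fun j : Fin D => (α + β * σ (j : ℕ) ^ 2) * (α + β * σ (j : ℕ) ^ 2)⁻¹)
        = fun _ => (1 : ℝ) := by
      funext j; exact mul_inv_cancel₀ (hne j)
    rw [h2, diagonal_one, Matrix.one_mul]
    exact hVV
  -- F A⁻¹ Fᵀ
  have hFAF : F * A⁻¹ * Fᵀ
      = U * diagonal (fun i : Fin n => σ (i : ℕ) ^ 2 * (α + β * σ (i : ℕ) ^ 2)⁻¹) * Uᵀ := by
    rw [hF, hAinv]
    simp only [transpose_mul, transpose_transpose, Matrix.mul_assoc]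
    rw [hVc _ _, hVc _ _]
    rw [show S * (diagonal (fun j : Fin D => (α + β * σ (j : ℕ) ^ 2)⁻¹) * (Sᵀ * Uᵀ))
        = (S * diagonal (fun j : Fin D => (α + β * σ (j : ℕ) ^ 2)⁻¹) * Sᵀ) * Uᵀ by
      simp only [Matrix.mul_assoc]]
    rw [hSdS (fun k => (α + β * σ k ^ 2)⁻¹), ← Matrix.mul_assoc]
  -- the key matrix identity
  have hMat : β • (F * A⁻¹ * Fᵀ) - 1
      = U * diagonal (fun i : Fin n => -(α * (α + β * σ (i : ℕ) ^ 2)⁻¹)) * Uᵀ := by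
    rw [hFAF]
    have h1 : (1 : Matrix (Fin n) (Fin n) ℝ) = U * 1 * Uᵀ := by
      rw [Matrix.mul_one, hUU]
    rw [h1, ← Matrix.smul_mul, ← Matrix.mul_smul, ← Matrix.sub_mul, ← Matrix.mul_sub]
    congr 2
    ext i j
    by_cases h : i = j
    · subst h
      have hp := hne (i : ℕ)
      simp only [Matrix.sub_apply, Matrix.smul_apply, diagonal_apply_eq, Matrix.one_apply_eq,
        smul_eq_mul]
      field_simp
      ring
    · simp [diagonal_apply, h, Matrix.one_apply]
  -- the residual vector
  have hFm : F *ᵥ m - y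
      = U *ᵥ (fun i : Fin n => -(α * (α + β * σ (i : ℕ) ^ 2)⁻¹) * z i) := by
    have hm' : F *ᵥ m = (β • (F * A⁻¹ * Fᵀ)) *ᵥ y := by
      show F *ᵥ (β • (A⁻¹ *ᵥ (Fᵀ *ᵥ y))) = _
      rw [Matrix.mulVec_smul, Matrix.mulVec_mulVec, Matrix.mulVec_mulVec,
        Matrix.smul_mulVec]
    calc F *ᵥ m - y = (β • (F * A⁻¹ * Fᵀ) - 1) *ᵥ y := by
          rw [hm', Matrix.sub_mulVec, Matrix.one_mulVec]
      _ = (U * diagonal (fun i : Fin n => -(α * (α + β * σ (i : ℕ) ^ 2)⁻¹)) * Uᵀ) *ᵥ y := by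
          rw [hMat]
      _ = U *ᵥ (fun i : Fin n => -(α * (α + β * σ (i : ℕ) ^ 2)⁻¹) * z i) := by
          rw [← Matrix.mulVec_mulVec, ← Matrix.mulVec_mulVec]
          have hd : (diagonal (fun i : Fin n => -(α * (α + β * σ (i : ℕ) ^ 2)⁻¹)) *ᵥ (Uᵀ *ᵥ y))
              = fun i : Fin n => -(α * (α + β * σ (i : ℕ) ^ 2)⁻¹) * z i := by
            funext i
            rw [Matrix.mulVec_diagonal]
          rw [hd]
  rw [hFm]
  have horth : ∀ v : Fin n → ℝ, (U *ᵥ v) ⬝ᵥ (U *ᵥ v) = v ⬝ᵥ v := by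
    intro v
    rw [Matrix.dotProduct_mulVec, ← Matrix.mulVec_transpose, Matrix.mulVec_mulVec, hU,
      Matrix.one_mulVec]
  rw [horth]
  simp only [dotProduct]
  refine Finset.sum_congr rfl fun i _ => ?_
  have hp := hne (i : ℕ)
  field_simp
end

section
/- With F = UΣVᵀ the SVD of F ∈ ℝ^{n×D}, y ∈ ℝⁿ, z = Uᵀy, and t = α/β, the MacKay update (α', β') satisfies t' = α'/β' = f(t), where f(t) = (n / (n - Σ_{i=1}^{D} σᵢ²/(t + σᵢ²)) - 1) · t² · (Σ_{i=1}^{n} zᵢ²/(t + σᵢ²)²) / (Σ_{i=1}^{n} σᵢ²zᵢ²/(t + σᵢ²)²), with σᵢ = 0 for indices beyond the rank of F. -/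
open Matrix

noncomputable def mkA (n D : ℕ) (F : Matrix (Fin n) (Fin D) ℝ) (α β : ℝ) :
    Matrix (Fin D) (Fin D) ℝ :=
  α • (1 : Matrix (Fin D) (Fin D) ℝ) + β • (Fᵀ * F)

noncomputable def mkM (n D : ℕ) (F : Matrix (Fin n) (Fin D) ℝ) (y : Fin n → ℝ)
    (α β : ℝ) : Fin D → ℝ :=
  β • ((mkA n D F α β)⁻¹ *ᵥ (Fᵀ *ᵥ y))

noncomputable def mkGamma (D : ℕ) (σ : ℕ → ℝ) (α β : ℝ) : ℝ :=
  ∑ j : Fin D, β * σ (j : ℕ) ^ 2 / (α + β * σ (j : ℕ) ^ 2)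

/-- The MacKay update map `g(α, β) = (α', β')`. -/
noncomputable def mackayG (n D : ℕ) (F : Matrix (Fin n) (Fin D) ℝ) (y : Fin n → ℝ)
    (σ : ℕ → ℝ) (α β : ℝ) : ℝ × ℝ :=
  (mkGamma D σ α β / (mkM n D F y α β ⬝ᵥ mkM n D F y α β),
    ((n : ℝ) - mkGamma D σ α β) /
      ((F *ᵥ mkM n D F y α β - y) ⬝ᵥ (F *ᵥ mkM n D F y α β - y)))

/-- The induced scalar iteration `f(t)` of Theorem 1. -/
noncomputable def mackayF (n D : ℕ) (σ : ℕ → ℝ) (z : ℕ → ℝ) (t : ℝ) : ℝ :=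
  ((n : ℝ) / ((n : ℝ) - ∑ i : Fin D, σ (i : ℕ) ^ 2 / (t + σ (i : ℕ) ^ 2)) - 1) *
    t ^ 2 *
    (∑ i : Fin n, z (i : ℕ) ^ 2 / (t + σ (i : ℕ) ^ 2) ^ 2) /
    (∑ i : Fin n, σ (i : ℕ) ^ 2 * z (i : ℕ) ^ 2 / (t + σ (i : ℕ) ^ 2) ^ 2)

lemma sum_ite_fin {n : ℕ} (c : ℕ) (f : Fin n → ℝ) :
    ∑ i : Fin n, (if (i : ℕ) = c then f i else 0) =
      if h : c < n then f ⟨c, h⟩ else 0 := by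
  split_ifs with h
  · rw [Finset.sum_eq_single (⟨c, h⟩ : Fin n)]
    · simp
    · intro b _ hb
      have : (b : ℕ) ≠ c := by
        intro hbc; exact hb (Fin.ext hbc)
      simp [this]
    · simp
  · apply Finset.sum_eq_zero
    intro i _
    have : (i : ℕ) ≠ c := by
      have := i.isLt; omega
    simp [this]

theorem mackay_update_induces_f (n D : ℕ) (F : Matrix (Fin n) (Fin D) ℝ)
    (U : Matrix (Fin n) (Fin n) ℝ) (V : Matrix (Fin D) (Fin D) ℝ) (σ : ℕ → ℝ)
    (hU : Uᵀ * U = 1) (hV : Vᵀ * V = 1) (hσ : ∀ i, 0 ≤ σ i)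
    (hσ0 : ∀ i, min n D ≤ i → σ i = 0)
    (hF : F = U * (Matrix.of fun (i : Fin n) (j : Fin D) =>
      if (i : ℕ) = (j : ℕ) then σ i else 0) * Vᵀ)
    (y : Fin n → ℝ) (z : ℕ → ℝ)
    (hz : ∀ i : Fin n, z (i : ℕ) = (Uᵀ *ᵥ y) i)
    (α β : ℝ) (hα : 0 < α) (hβ : 0 < β)
    (hm : mkM n D F y α β ⬝ᵥ mkM n D F y α β ≠ 0)
    (hres : (F *ᵥ mkM n D F y α β - y) ⬝ᵥ (F *ᵥ mkM n D F y α β - y) ≠ 0)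
    (hγn : mkGamma D σ α β ≠ n)
    (hden : (∑ i : Fin n, σ (i : ℕ) ^ 2 * z (i : ℕ) ^ 2 /
      (α / β + σ (i : ℕ) ^ 2) ^ 2) ≠ 0) :
    (mackayG n D F y σ α β).1 / (mackayG n D F y σ α β).2 =
      mackayF n D σ z (α / β) := by
  have hβ' : β ≠ 0 := ne_of_gt hβ
  set S : Matrix (Fin n) (Fin D) ℝ :=
    Matrix.of fun (i : Fin n) (j : Fin D) => if (i : ℕ) = (j : ℕ) then σ i else 0 with hSdef
  set d : ℕ → ℝ := fun k => α + β * σ k ^ 2 with hddef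
  have hdpos : ∀ k, 0 < d k := by
    intro k
    have := hσ k
    have : 0 ≤ β * σ k ^ 2 := by positivity
    simp only [hddef]; linarith
  have hdne : ∀ k, d k ≠ 0 := fun k => ne_of_gt (hdpos k)
  have hVV : V * Vᵀ = 1 := mul_eq_one_comm.mp hV
  have hUU : U * Uᵀ = 1 := mul_eq_one_comm.mp hU
  have keyU : ∀ X : Matrix (Fin n) (Fin D) ℝ, Uᵀ * (U * X) = X := by
    intro X; rw [← Matrix.mul_assoc, hU, Matrix.one_mul]
  have keyVtV : ∀ X : Matrix (Fin D) (Fin D) ℝ, Vᵀ * (V * X) = X := by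
    intro X; rw [← Matrix.mul_assoc, hV, Matrix.one_mul]
  -- SᵀS is diagonal
  have hSS : Sᵀ * S = diagonal (fun j : Fin D => σ (j : ℕ) ^ 2) := by
    ext j k
    simp only [mul_apply, transpose_apply, hSdef, of_apply, diagonal_apply]
    by_cases hjk : j = k
    · subst hjk
      simp only [if_pos rfl]
      have heq : ∀ i : Fin n,
          (if (i : ℕ) = (j : ℕ) then σ (i : ℕ) else 0) *
            (if (i : ℕ) = (j : ℕ) then σ (i : ℕ) else 0) =
          (if (i : ℕ) = (j : ℕ) then σ (i : ℕ) ^ 2 else 0) := by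
        intro i; split_ifs <;> ring
      rw [Finset.sum_congr rfl fun i _ => heq i, sum_ite_fin]
      split_ifs with h
      · rfl
      · have : σ (j : ℕ) = 0 := by
          apply hσ0
          exact le_trans (min_le_left n D) (le_of_not_gt h)
        rw [this]; ring
    · rw [if_neg hjk]
      apply Finset.sum_eq_zero
      intro i _
      by_cases h1 : (i : ℕ) = (j : ℕ)
      · have h2 : (i : ℕ) ≠ (k : ℕ) := by
          intro h2; exact hjk (Fin.ext (h1.symm.trans h2))
        simp [h2]
      · simp [h1]
  -- F^T F
  have hFtF : Fᵀ * F = V * diagonal (fun j : Fin D => σ (j : ℕ) ^ 2) * Vᵀ := by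
    rw [hF]
    simp only [transpose_mul, transpose_transpose, Matrix.mul_assoc]
    rw [keyU, ← Matrix.mul_assoc Sᵀ, hSS]
  -- A
  have hdiag : diagonal (fun j : Fin D => d (j : ℕ)) =
      α • (1 : Matrix (Fin D) (Fin D) ℝ) +
        β • diagonal (fun j : Fin D => σ (j : ℕ) ^ 2) := by
    ext j k
    by_cases h : j = k
    · subst h
      simp [diagonal_apply, hddef]
    · simp [diagonal_apply, h, Matrix.one_apply_ne h]
  have hA : mkA n D F α β = V * diagonal (fun j : Fin D => d (j : ℕ)) * Vᵀ := by
    rw [mkA, hFtF, hdiag]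
    simp only [Matrix.mul_add, Matrix.add_mul, Matrix.mul_smul, Matrix.smul_mul,
      Matrix.mul_one, Matrix.mul_assoc]
    rw [hVV]
  have hAinv : (mkA n D F α β)⁻¹ =
      V * diagonal (fun j : Fin D => (d (j : ℕ))⁻¹) * Vᵀ := by
    apply Matrix.inv_eq_right_inv
    rw [hA]
    simp only [Matrix.mul_assoc]
    rw [keyVtV, ← Matrix.mul_assoc (diagonal _), diagonal_mul_diagonal]
    have : (fun i : Fin D => d (i : ℕ) * (d (i : ℕ))⁻¹) = fun _ => (1 : ℝ) := by
      funext i; exact mul_inv_cancel₀ (hdne i)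
    rw [this, diagonal_one, Matrix.one_mul]
    exact hVV
  -- m = V *ᵥ w
  set w : Fin D → ℝ := fun j => β * σ (j : ℕ) * z (j : ℕ) / d (j : ℕ) with hwdef
  have hFt : Fᵀ = V * (Sᵀ * Uᵀ) := by
    rw [hF]; simp only [transpose_mul, transpose_transpose, Matrix.mul_assoc]
  have hStz : Sᵀ *ᵥ (Uᵀ *ᵥ y) = fun j : Fin D => σ (j : ℕ) * z (j : ℕ) := by
    funext j
    show ∑ i : Fin n, Sᵀ j i * (Uᵀ *ᵥ y) i = _
    have heq : ∀ i : Fin n, Sᵀ j i * (Uᵀ *ᵥ y) i =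
        if (i : ℕ) = (j : ℕ) then σ (i : ℕ) * (Uᵀ *ᵥ y) i else 0 := by
      intro i
      simp only [transpose_apply, hSdef, of_apply]
      split_ifs <;> ring
    rw [Finset.sum_congr rfl fun i _ => heq i, sum_ite_fin]
    split_ifs with h
    · rw [← hz ⟨(j : ℕ), h⟩]
    · have : σ (j : ℕ) = 0 :=
        hσ0 _ (le_trans (min_le_left n D) (le_of_not_gt h))
      rw [this]; ring
  have hm_eq : mkM n D F y α β = V *ᵥ w := by
    have hcomb : V * diagonal (fun j : Fin D => (d (j : ℕ))⁻¹) * Vᵀ * (V * (Sᵀ * Uᵀ))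
        = V * (diagonal (fun j : Fin D => (d (j : ℕ))⁻¹) * (Sᵀ * Uᵀ)) := by
      simp only [Matrix.mul_assoc]
      rw [← Matrix.mul_assoc Vᵀ V, hV, Matrix.one_mul]
    rw [mkM, hAinv, hFt, Matrix.mulVec_mulVec, hcomb]
    rw [← Matrix.mulVec_mulVec, ← Matrix.mulVec_mulVec, ← Matrix.mulVec_mulVec, hStz]
    rw [← Matrix.mulVec_smul]
    have hx : β • ((diagonal fun j : Fin D => (d (j : ℕ))⁻¹) *ᵥ
        fun j : Fin D => σ (j : ℕ) * z (j : ℕ)) = w := by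
      funext j
      have hdj : d (j : ℕ) ≠ 0 := hdne (j : ℕ)
      simp only [Pi.smul_apply, mulVec_diagonal, smul_eq_mul, hwdef]
      field_simp
    rw [hx]
  -- m ⬝ m
  have hdot : ∀ (v : Fin D → ℝ), (V *ᵥ v) ⬝ᵥ (V *ᵥ v) = v ⬝ᵥ v := by
    intro v
    rw [Matrix.dotProduct_mulVec, ← Matrix.mulVec_transpose, Matrix.mulVec_mulVec, hV,
      Matrix.one_mulVec]
  have hmm2 : mkM n D F y α β ⬝ᵥ mkM n D F y α β = w ⬝ᵥ w := by
    rw [hm_eq, hdot]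
  -- Fm - y = U *ᵥ r
  set r : Fin n → ℝ := fun i => β * σ (i : ℕ) ^ 2 * z (i : ℕ) / d (i : ℕ) - z (i : ℕ)
    with hrdef
  have hSw : S *ᵥ w = fun i : Fin n => β * σ (i : ℕ) ^ 2 * z (i : ℕ) / d (i : ℕ) := by
    funext i
    show ∑ j : Fin D, S i j * w j = _
    have heq : ∀ j : Fin D, S i j * w j =
        if (j : ℕ) = (i : ℕ) then σ (i : ℕ) * w j else 0 := by
      intro j
      simp only [hSdef, of_apply]
      by_cases h : (i : ℕ) = (j : ℕ)
      · rw [if_pos h, if_pos h.symm]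
      · rw [if_neg h, if_neg (Ne.symm h), zero_mul]
    rw [Finset.sum_congr rfl fun j _ => heq j, sum_ite_fin]
    split_ifs with h
    · simp only [hwdef]
      ring
    · have : σ (i : ℕ) = 0 :=
        hσ0 _ (le_trans (min_le_right n D) (le_of_not_gt h))
      rw [this]; ring
  have hy : U *ᵥ (Uᵀ *ᵥ y) = y := by
    rw [Matrix.mulVec_mulVec, hUU, Matrix.one_mulVec]
  have hFm : F *ᵥ mkM n D F y α β - y = U *ᵥ r := by
    have hUSV : U * S * Vᵀ * V = U * S := by
      rw [Matrix.mul_assoc (U * S) Vᵀ V, hV, Matrix.mul_one]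
    rw [hm_eq, hF]
    rw [Matrix.mulVec_mulVec, hUSV, ← Matrix.mulVec_mulVec, hSw]
    rw [← hy]
    rw [← Matrix.mulVec_sub]
    have hx : (fun i : Fin n => β * σ (i : ℕ) ^ 2 * z (i : ℕ) / d (i : ℕ)) - Uᵀ *ᵥ y
        = r := by
      funext i
      simp only [Pi.sub_apply, hrdef]
      rw [← hz i]
    rw [hx]
  have hdotU : ∀ (v : Fin n → ℝ), (U *ᵥ v) ⬝ᵥ (U *ᵥ v) = v ⬝ᵥ v := by
    intro v
    rw [Matrix.dotProduct_mulVec, ← Matrix.mulVec_transpose, Matrix.mulVec_mulVec, hU,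
      Matrix.one_mulVec]
  have hrr2 : (F *ᵥ mkM n D F y α β - y) ⬝ᵥ (F *ᵥ mkM n D F y α β - y) = r ⬝ᵥ r := by
    rw [hFm, hdotU]
  -- scalar values
  set t : ℝ := α / β with htdef
  have htd : ∀ k, t + σ k ^ 2 ≠ 0 := by
    intro k
    have := hσ k
    have h1 : 0 < t := div_pos hα hβ
    positivity
  have hww : w ⬝ᵥ w =
      ∑ j : Fin D, σ (j : ℕ) ^ 2 * z (j : ℕ) ^ 2 / (t + σ (j : ℕ) ^ 2) ^ 2 := by
    rw [dotProduct]
    apply Finset.sum_congr rfl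
    intro j _
    simp only [hwdef, hddef, htdef]
    field_simp
  have hgsum : ∀ (g : ℕ → ℝ), (∀ k, min n D ≤ k → g k = 0) →
      ∑ j : Fin D, g (j : ℕ) = ∑ i : Fin n, g (i : ℕ) := by
    intro g hg
    rw [Fin.sum_univ_eq_sum_range, Fin.sum_univ_eq_sum_range]
    have h1 : ∑ k ∈ Finset.range (min n D), g k = ∑ k ∈ Finset.range D, g k := by
      apply Finset.sum_subset
      · exact Finset.range_subset_range.mpr (min_le_right n D)
      · intro x _ hx
        exact hg x (le_of_not_gt (fun h => hx (Finset.mem_range.mpr h)))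
    have h2 : ∑ k ∈ Finset.range (min n D), g k = ∑ k ∈ Finset.range n, g k := by
      apply Finset.sum_subset
      · exact Finset.range_subset_range.mpr (min_le_left n D)
      · intro x _ hx
        exact hg x (le_of_not_gt (fun h => hx (Finset.mem_range.mpr h)))
    rw [← h1, h2]
  have hwwn : w ⬝ᵥ w =
      ∑ i : Fin n, σ (i : ℕ) ^ 2 * z (i : ℕ) ^ 2 / (t + σ (i : ℕ) ^ 2) ^ 2 := by
    rw [hww]
    apply hgsum (fun k => σ k ^ 2 * z k ^ 2 / (t + σ k ^ 2) ^ 2)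
    intro k hk
    rw [hσ0 k hk]
    simp
  have hrr : r ⬝ᵥ r = t ^ 2 * ∑ i : Fin n, z (i : ℕ) ^ 2 / (t + σ (i : ℕ) ^ 2) ^ 2 := by
    rw [dotProduct, Finset.mul_sum]
    apply Finset.sum_congr rfl
    intro i _
    simp only [hrdef, hddef, htdef]
    field_simp
    ring
  have hgamma : mkGamma D σ α β = ∑ j : Fin D, σ (j : ℕ) ^ 2 / (t + σ (j : ℕ) ^ 2) := by
    rw [mkGamma]
    apply Finset.sum_congr rfl
    intro j _
    have e1 : α + β * σ (j : ℕ) ^ 2 ≠ 0 := hdne (j : ℕ)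
    have e2 : t + σ (j : ℕ) ^ 2 ≠ 0 := htd (j : ℕ)
    rw [htdef] at e2 ⊢
    field_simp
  -- final assembly
  simp only [mackayG, mackayF]
  rw [hmm2, hrr2, hwwn, hrr, hgamma]
  rw [hrr2, hrr] at hres
  have hΓ : (n : ℝ) - (∑ j : Fin D, σ (j : ℕ) ^ 2 / (t + σ (j : ℕ) ^ 2)) ≠ 0 := by
    rw [sub_ne_zero]
    rw [hgamma] at hγn
    exact fun h => hγn h.symm
  field_simp
  ring
end

section
/- Let σ₁ ≥ ... ≥ σ_n ≥ 0 with exactly r nonzero values where 0 < r < n, and z ∈ ℝⁿ with Σ_{i=1}^{r} zᵢ² > 0, Σ_{i=r+1}^{n} zᵢ² > 0, and Σ_{1 ≤ i,j ≤ n}(zᵢ² - zⱼ²)(σᵢ² - σⱼ²) > 0. Then the function f(t) = (n/(n - Σᵢ σᵢ²/(t+σᵢ²)) - 1)·t²·(Σᵢ zᵢ²/(t+σᵢ²)²)/(Σᵢ σᵢ²zᵢ²/(t+σᵢ²)²) has a fixed point on (0, ∞), i.e., there exists t₀ > 0 with f(t₀) = t₀. -/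
/-- The scalar iteration `f(t)` with all sums running over the `n` indices. -/
noncomputable def mackayFA (n : ℕ) (σ z : Fin n → ℝ) (t : ℝ) : ℝ :=
  ((n : ℝ) / ((n : ℝ) - ∑ i : Fin n, σ i ^ 2 / (t + σ i ^ 2)) - 1) * t ^ 2 *
    (∑ i : Fin n, z i ^ 2 / (t + σ i ^ 2) ^ 2) /
    (∑ i : Fin n, σ i ^ 2 * z i ^ 2 / (t + σ i ^ 2) ^ 2)

open Filter Topology Finset

private lemma mackay_tdiv_atTop (c : ℝ) (hc : 0 ≤ c) :
    Tendsto (fun t : ℝ => t / (t + c)) atTop (𝓝 1) := by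
  have h0 : Tendsto (fun t : ℝ => 1 - c / (t + c)) atTop (𝓝 1) := by
    have := (tendsto_const_nhds (α := ℝ) (x := c)).div_atTop
      (tendsto_atTop_add_const_right atTop c tendsto_id)
    simpa using (tendsto_const_nhds (x := (1:ℝ))).sub this
  refine h0.congr' ?_
  filter_upwards [eventually_gt_atTop (0:ℝ)] with t ht
  have h1 : t + c ≠ 0 := by linarith
  field_simp
  ring

private lemma mackay_St_atTop (n : ℕ) (σ : Fin n → ℝ) :
    Tendsto (fun t : ℝ => (∑ i : Fin n, σ i ^ 2 / (t + σ i ^ 2)) * t) atTop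
      (𝓝 (∑ i : Fin n, σ i ^ 2)) := by
  have h : ∀ t : ℝ, (∑ i : Fin n, σ i ^ 2 / (t + σ i ^ 2)) * t
      = ∑ i : Fin n, σ i ^ 2 * (t / (t + σ i ^ 2)) := by
    intro t; rw [Finset.sum_mul]; congr 1; ext i; ring
  simp only [h]
  have := tendsto_finset_sum (f := fun (i : Fin n) (t : ℝ) => σ i ^ 2 * (t / (t + σ i ^ 2)))
    Finset.univ (fun i _ =>
      ((mackay_tdiv_atTop (σ i ^2) (sq_nonneg _)).const_mul (σ i ^2)))
  simpa using this

private lemma mackay_tsqN_atTop (n : ℕ) (σ z : Fin n → ℝ) :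
    Tendsto (fun t : ℝ => t ^ 2 * ∑ i : Fin n, z i ^ 2 / (t + σ i ^ 2) ^ 2) atTop
      (𝓝 (∑ i : Fin n, z i ^ 2)) := by
  have h : ∀ t : ℝ, t ^ 2 * (∑ i : Fin n, z i ^ 2 / (t + σ i ^ 2) ^ 2)
      = ∑ i : Fin n, z i ^ 2 * (t / (t + σ i ^ 2)) ^ 2 := by
    intro t; rw [Finset.mul_sum]; congr 1; ext i; rw [div_pow]; ring
  simp only [h]
  have := tendsto_finset_sum (f := fun (i : Fin n) (t : ℝ) => z i ^ 2 * (t / (t + σ i ^ 2)) ^ 2)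
    Finset.univ (fun i _ =>
      (((mackay_tdiv_atTop (σ i ^2) (sq_nonneg _)).pow 2).const_mul (z i ^2)))
  simpa using this

private lemma mackay_tsqD_atTop (n : ℕ) (σ z : Fin n → ℝ) :
    Tendsto (fun t : ℝ => t ^ 2 * ∑ i : Fin n, σ i ^ 2 * z i ^ 2 / (t + σ i ^ 2) ^ 2) atTop
      (𝓝 (∑ i : Fin n, σ i ^ 2 * z i ^ 2)) := by
  have h : ∀ t : ℝ, t ^ 2 * (∑ i : Fin n, σ i ^ 2 * z i ^ 2 / (t + σ i ^ 2) ^ 2)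
      = ∑ i : Fin n, σ i ^ 2 * z i ^ 2 * (t / (t + σ i ^ 2)) ^ 2 := by
    intro t; rw [Finset.mul_sum]; congr 1; ext i; rw [div_pow]; ring
  simp only [h]
  have := tendsto_finset_sum
    (f := fun (i : Fin n) (t : ℝ) => σ i ^ 2 * z i ^ 2 * (t / (t + σ i ^ 2)) ^ 2)
    Finset.univ (fun i _ =>
      (((mackay_tdiv_atTop (σ i ^2) (sq_nonneg _)).pow 2).const_mul (σ i ^2 * z i ^2)))
  simpa using this

private lemma mackay_S_atTop (n : ℕ) (σ : Fin n → ℝ) :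
    Tendsto (fun t : ℝ => ∑ i : Fin n, σ i ^ 2 / (t + σ i ^ 2)) atTop (𝓝 0) := by
  have := tendsto_finset_sum (f := fun (i : Fin n) (t : ℝ) => σ i ^ 2 / (t + σ i ^ 2))
    Finset.univ (fun i _ =>
      (tendsto_const_nhds (x := σ i ^ 2)).div_atTop
        (tendsto_atTop_add_const_right atTop (σ i ^2) tendsto_id))
  simpa using this

private lemma mackay_S_zero (n r : ℕ) (hr : r < n) (σ : Fin n → ℝ)
    (hpos : ∀ i : Fin n, (i : ℕ) < r → 0 < σ i)
    (hzero : ∀ i : Fin n, r ≤ (i : ℕ) → σ i = 0) :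
    Tendsto (fun t : ℝ => ∑ i : Fin n, σ i ^ 2 / (t + σ i ^ 2)) (𝓝[>] 0)
      (𝓝 r) := by
  have key : Tendsto (fun t : ℝ => ∑ i : Fin n, σ i ^ 2 / (t + σ i ^ 2)) (𝓝[>] 0)
      (𝓝 (∑ i : Fin n, if (i : ℕ) < r then (1:ℝ) else 0)) := by
    refine tendsto_finset_sum _ (fun i _ => ?_)
    by_cases h : (i : ℕ) < r
    · simp only [h, if_pos]
      have hσ : (0:ℝ) < σ i ^ 2 := by have := hpos i h; positivity
      have hc : Tendsto (fun t : ℝ => σ i ^ 2 / (t + σ i ^ 2)) (𝓝 0)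
          (𝓝 (σ i ^ 2 / (0 + σ i ^ 2))) := by
        refine Tendsto.div tendsto_const_nhds ?_ (by simp [hσ.ne'])
        exact (continuous_id.add continuous_const).tendsto 0
      have heq : σ i ^ 2 / (0 + σ i ^ 2) = 1 := by rw [zero_add, div_self hσ.ne']
      rw [heq] at hc
      exact tendsto_nhdsWithin_of_tendsto_nhds hc
    · simp only [h, if_neg, not_false_iff]
      have hz : σ i = 0 := hzero i (le_of_not_gt h)
      simp [hz]
  convert key using 2
  rw [Finset.sum_boole]
  congr 1
  have heq : (Finset.univ.filter (fun i : Fin n => (i : ℕ) < r)) = Finset.Iio (⟨r, hr⟩ : Fin n) := by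
    ext i; simp [Fin.lt_def]
  rw [heq, Fin.card_Iio]

private lemma mackay_tsqN_zero (n r : ℕ) (σ z : Fin n → ℝ)
    (hpos : ∀ i : Fin n, (i : ℕ) < r → 0 < σ i)
    (hzero : ∀ i : Fin n, r ≤ (i : ℕ) → σ i = 0) :
    Tendsto (fun t : ℝ => t ^ 2 * ∑ i : Fin n, z i ^ 2 / (t + σ i ^ 2) ^ 2) (𝓝[>] 0)
      (𝓝 (∑ i ∈ Finset.univ.filter (fun i : Fin n => r ≤ (i : ℕ)), z i ^ 2)) := by
  have hrw : ∀ t : ℝ, t ^ 2 * (∑ i : Fin n, z i ^ 2 / (t + σ i ^ 2) ^ 2)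
      = ∑ i : Fin n, z i ^ 2 * (t / (t + σ i ^ 2)) ^ 2 := by
    intro t; rw [Finset.mul_sum]; congr 1; ext i; rw [div_pow]; ring
  simp only [hrw]
  have hval : (∑ i ∈ Finset.univ.filter (fun i : Fin n => r ≤ (i : ℕ)), z i ^ 2)
      = ∑ i : Fin n, if r ≤ (i : ℕ) then z i ^ 2 else 0 := by
    rw [Finset.sum_ite, Finset.sum_const_zero, add_zero]
  rw [hval]
  refine tendsto_finset_sum _ (fun i _ => ?_)
  by_cases h : r ≤ (i : ℕ)
  · simp only [h, if_pos]
    have hz : σ i = 0 := hzero i h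
    refine Tendsto.congr' ?_ tendsto_const_nhds
    filter_upwards [self_mem_nhdsWithin] with t ht
    have : t ≠ 0 := ne_of_gt ht
    simp [hz, this]
  · simp only [h, if_neg, not_false_iff]
    have hσ : (0:ℝ) < σ i ^ 2 := by
      have := hpos i (lt_of_not_ge h); positivity
    have hc : Tendsto (fun t : ℝ => z i ^ 2 * (t / (t + σ i ^ 2)) ^ 2) (𝓝 0)
        (𝓝 (z i ^ 2 * (0 / (0 + σ i ^ 2)) ^ 2)) := by
      refine Tendsto.const_mul _ (Tendsto.pow ?_ 2)
      exact Tendsto.div tendsto_id ((continuous_id.add continuous_const).tendsto 0)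
        (by simp [hσ.ne'])
    simp only [zero_div, ne_eq, OfNat.ofNat_ne_zero, not_false_eq_true, zero_pow,
      mul_zero] at hc
    exact tendsto_nhdsWithin_of_tendsto_nhds hc

private lemma mackay_D_zero (n r : ℕ) (σ z : Fin n → ℝ)
    (hpos : ∀ i : Fin n, (i : ℕ) < r → 0 < σ i)
    (hzero : ∀ i : Fin n, r ≤ (i : ℕ) → σ i = 0) :
    Tendsto (fun t : ℝ => ∑ i : Fin n, σ i ^ 2 * z i ^ 2 / (t + σ i ^ 2) ^ 2) (𝓝[>] 0)
      (𝓝 (∑ i : Fin n, σ i ^ 2 * z i ^ 2 / (0 + σ i ^ 2) ^ 2)) := by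
  refine tendsto_finset_sum _ (fun i _ => ?_)
  by_cases h : r ≤ (i : ℕ)
  · have hz : σ i = 0 := hzero i h
    simp [hz]
  · have hσ : (0:ℝ) < σ i ^ 2 := by
      have := hpos i (lt_of_not_ge h); positivity
    refine tendsto_nhdsWithin_of_tendsto_nhds ?_
    refine Tendsto.div tendsto_const_nhds (Tendsto.pow ?_ 2) (by simp [hσ.ne'])
    exact (continuous_id.add continuous_const).tendsto 0

theorem mackayF_has_fixed_point (n r : ℕ) (hr0 : 0 < r) (hr : r < n)
    (σ z : Fin n → ℝ)
    (hmono : ∀ i j : Fin n, i ≤ j → σ j ≤ σ i) (hσ : ∀ i, 0 ≤ σ i)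
    (hpos : ∀ i : Fin n, (i : ℕ) < r → 0 < σ i)
    (hzero : ∀ i : Fin n, r ≤ (i : ℕ) → σ i = 0)
    (hz1 : 0 < ∑ i ∈ Finset.univ.filter (fun i : Fin n => (i : ℕ) < r), z i ^ 2)
    (hz2 : 0 < ∑ i ∈ Finset.univ.filter (fun i : Fin n => r ≤ (i : ℕ)), z i ^ 2)
    (hcheb : 0 < ∑ i : Fin n, ∑ j : Fin n,
      (z i ^ 2 - z j ^ 2) * (σ i ^ 2 - σ j ^ 2)) :
    ∃ t₀ : ℝ, 0 < t₀ ∧ mackayFA n σ z t₀ = t₀ := by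
  have hn : 0 < n := lt_trans hr0 hr
  set S : ℝ → ℝ := fun t => ∑ i : Fin n, σ i ^ 2 / (t + σ i ^ 2) with hS_def
  set N : ℝ → ℝ := fun t => ∑ i : Fin n, z i ^ 2 / (t + σ i ^ 2) ^ 2 with hN_def
  set D : ℝ → ℝ := fun t => ∑ i : Fin n, σ i ^ 2 * z i ^ 2 / (t + σ i ^ 2) ^ 2 with hD_def
  set h : ℝ → ℝ := fun t => S t * (t * N t) - ((n : ℝ) - S t) * D t with hh_def
  -- basic positivity facts
  have hden : ∀ (t : ℝ), 0 < t → ∀ i : Fin n, (0:ℝ) < t + σ i ^ 2 := by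
    intro t ht i; positivity
  have hSlt : ∀ t : ℝ, 0 < t → S t < n := by
    intro t ht
    calc S t < ∑ _i : Fin n, (1:ℝ) := by
          refine Finset.sum_lt_sum_of_nonempty (by simp [Fin.pos_iff_nonempty.mp hn]) ?_
          intro i _
          rw [div_lt_one (hden t ht i)]; linarith [sq_nonneg (σ i)]
      _ = n := by simp
  have hDpos : ∀ t : ℝ, 0 < t → 0 < D t := by
    intro t ht
    obtain ⟨i, hi, hzi⟩ := Finset.exists_ne_zero_of_sum_ne_zero hz1.ne'
    have hir : (i : ℕ) < r := by simpa using (Finset.mem_filter.mp hi).2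
    have hσi := hpos i hir
    refine Finset.sum_pos' (fun j _ => by positivity) ⟨i, Finset.mem_univ i, ?_⟩
    have h1 := hden t ht i
    have h2 : (0:ℝ) < z i ^ 2 := lt_of_le_of_ne (sq_nonneg _) (Ne.symm hzi)
    positivity
  have hNpos : ∀ t : ℝ, 0 < t → 0 < N t := by
    intro t ht
    obtain ⟨i, hi, hzi⟩ := Finset.exists_ne_zero_of_sum_ne_zero hz2.ne'
    refine Finset.sum_pos' (fun j _ => by positivity) ⟨i, Finset.mem_univ i, ?_⟩
    have h1 := hden t ht i
    have h2 : (0:ℝ) < z i ^ 2 := lt_of_le_of_ne (sq_nonneg _) (Ne.symm hzi)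
    positivity
  -- h t = 0 gives fixed point
  have hfix : ∀ t : ℝ, 0 < t → h t = 0 → mackayFA n σ z t = t := by
    intro t ht hzero'
    have hnS : (0:ℝ) < (n : ℝ) - S t := sub_pos.2 (hSlt t ht)
    have hD := hDpos t ht
    have key : S t * (t * N t) = ((n : ℝ) - S t) * D t := by
      have := hzero'; simp only [hh_def] at this; linarith
    show ((n : ℝ) / ((n : ℝ) - S t) - 1) * t ^ 2 * N t / D t = t
    rw [div_eq_iff hD.ne']
    field_simp
    nlinarith [key, hnS, hD, ht]
  -- continuity of h on Ioi 0
  have hcont : ContinuousOn h (Set.Ioi (0:ℝ)) := by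
    have hcS : ContinuousOn S (Set.Ioi (0:ℝ)) := by
      refine continuousOn_finset_sum _ (fun i _ => ?_)
      exact ContinuousOn.div continuousOn_const
        (continuousOn_id.add continuousOn_const)
        (fun x hx => (hden x hx i).ne')
    have hcN : ContinuousOn N (Set.Ioi (0:ℝ)) := by
      refine continuousOn_finset_sum _ (fun i _ => ?_)
      exact ContinuousOn.div continuousOn_const
        ((continuousOn_id.add continuousOn_const).pow 2)
        (fun x hx => by have h1 : (0:ℝ) < x + σ i ^ 2 := hden x hx i; positivity)
    have hcD : ContinuousOn D (Set.Ioi (0:ℝ)) := by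
      refine continuousOn_finset_sum _ (fun i _ => ?_)
      exact ContinuousOn.div continuousOn_const
        ((continuousOn_id.add continuousOn_const).pow 2)
        (fun x hx => by have h1 : (0:ℝ) < x + σ i ^ 2 := hden x hx i; positivity)
    exact (hcS.mul (continuousOn_id.mul hcN)).sub ((continuousOn_const.sub hcS).mul hcD)
  -- positivity near 0
  have hψ : Tendsto (fun t : ℝ => S t * (t ^ 2 * N t) - (t * ((n : ℝ) - S t)) * D t)
      (𝓝[>] 0)
      (𝓝 ((r : ℝ) * (∑ i ∈ Finset.univ.filter (fun i : Fin n => r ≤ (i : ℕ)), z i ^ 2))) := by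
    have h1 := mackay_S_zero n r hr σ hpos hzero
    have h2 := mackay_tsqN_zero n r σ z hpos hzero
    have h3 := mackay_D_zero n r σ z hpos hzero
    have ht0 : Tendsto (fun t : ℝ => t) (𝓝[>] (0:ℝ)) (𝓝 0) :=
      tendsto_id.mono_right nhdsWithin_le_nhds
    have := (h1.mul h2).sub (((ht0.mul ((tendsto_const_nhds (x := (n:ℝ))).sub h1)).mul h3))
    simpa using this
  have hψpos : ∀ᶠ t in 𝓝[>] (0:ℝ),
      0 < S t * (t ^ 2 * N t) - (t * ((n : ℝ) - S t)) * D t := by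
    apply hψ.eventually_const_lt
    positivity
  obtain ⟨t₁, ht₁pos, ht₁⟩ : ∃ t₁ : ℝ, 0 < t₁ ∧ 0 < h t₁ := by
    obtain ⟨t, ht, h1⟩ := (hψpos.and self_mem_nhdsWithin).exists
    have htpos : (0:ℝ) < t := h1
    refine ⟨t, htpos, ?_⟩
    have heq : S t * (t ^ 2 * N t) - (t * ((n : ℝ) - S t)) * D t = t * h t := by
      simp only [hh_def]; ring
    rw [heq] at ht
    rcases mul_pos_iff.mp ht with ⟨_, hht⟩ | ⟨hneg, _⟩
    · exact hht
    · exact absurd htpos (not_lt.mpr hneg.le)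
  -- negativity at infinity
  have hAZ : (∑ i : Fin n, σ i ^ 2) * (∑ i : Fin n, z i ^ 2)
      < (n : ℝ) * (∑ i : Fin n, σ i ^ 2 * z i ^ 2) := by
    have hid : (∑ i : Fin n, ∑ j : Fin n, (z i ^ 2 - z j ^ 2) * (σ i ^ 2 - σ j ^ 2))
        = 2 * ((n : ℝ) * (∑ i : Fin n, σ i ^ 2 * z i ^ 2)
          - (∑ i : Fin n, σ i ^ 2) * (∑ i : Fin n, z i ^ 2)) := by
      have hij : ∀ i j : Fin n, (z i ^ 2 - z j ^ 2) * (σ i ^ 2 - σ j ^ 2)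
          = (σ i ^2 * z i ^2 + σ j ^2 * z j ^2) - (z i ^2 * σ j ^2 + z j ^2 * σ i ^2) := by
        intro i j; ring
      simp only [hij, Finset.sum_sub_distrib, Finset.sum_add_distrib, Finset.sum_const,
        Finset.card_univ, Fintype.card_fin, nsmul_eq_mul, ← Finset.mul_sum, ← Finset.sum_mul]
      ring
    rw [hid] at hcheb
    linarith
  have hφ : Tendsto (fun t : ℝ => (S t * t) * (t ^ 2 * N t) - ((n : ℝ) - S t) * (t ^ 2 * D t))
      atTop
      (𝓝 ((∑ i : Fin n, σ i ^ 2) * (∑ i : Fin n, z i ^ 2)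
        - (n : ℝ) * (∑ i : Fin n, σ i ^ 2 * z i ^ 2))) := by
    have h1 := mackay_St_atTop n σ
    have h2 := mackay_tsqN_atTop n σ z
    have h3 := mackay_tsqD_atTop n σ z
    have h4 := mackay_S_atTop n σ
    have := (h1.mul h2).sub (((tendsto_const_nhds (x := (n:ℝ))).sub h4).mul h3)
    simpa using this
  have hφneg : ∀ᶠ t in atTop,
      (S t * t) * (t ^ 2 * N t) - ((n : ℝ) - S t) * (t ^ 2 * D t) < 0 :=
    hφ.eventually_lt_const (by linarith)
  obtain ⟨t₂, ht₂gt, ht₂⟩ : ∃ t₂ : ℝ, t₁ < t₂ ∧ h t₂ < 0 := by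
    obtain ⟨t, h1, h2⟩ := (hφneg.and (eventually_gt_atTop t₁)).exists
    refine ⟨t, h2, ?_⟩
    have htpos : (0:ℝ) < t := lt_trans ht₁pos h2
    have heq : (S t * t) * (t ^ 2 * N t) - ((n : ℝ) - S t) * (t ^ 2 * D t)
        = t ^ 2 * h t := by
      simp only [hh_def]; ring
    rw [heq] at h1
    by_contra hc
    exact absurd h1 (not_lt.mpr (mul_nonneg (sq_nonneg t) (not_lt.mp hc)))
  -- IVT
  have hsub : Set.Icc t₁ t₂ ⊆ Set.Ioi (0:ℝ) := fun x hx => lt_of_lt_of_le ht₁pos hx.1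
  have hIVT := intermediate_value_Icc' (le_of_lt ht₂gt) (hcont.mono hsub)
  have h0mem : (0:ℝ) ∈ Set.Icc (h t₂) (h t₁) := ⟨le_of_lt ht₂, le_of_lt ht₁⟩
  obtain ⟨t₀, ht₀mem, ht₀⟩ := hIVT h0mem
  have ht₀pos : 0 < t₀ := lt_of_lt_of_le ht₁pos ht₀mem.1
  exact ⟨t₀, ht₀pos, hfix t₀ ht₀pos ht₀⟩
end

section
/- Let F ∈ ℝ^{n×D}, y ∈ ℝⁿ, and let F̃ = [F, ..., F] ∈ ℝ^{n×qD} be q horizontal copies of F. Fix α, β > 0 and set α̃ = qα, β̃ = β. With A = αI_D + βFᵀF, m = βA⁻¹Fᵀy, Ã = α̃I_{qD} + β̃F̃ᵀF̃, m̃ = β̃Ã⁻¹F̃ᵀy, it holds that m̃ = (1/q)·[m; m; ...; m] (q vertical copies of m/q), m̃ᵀm̃ = (1/q)·mᵀm, and F̃m̃ = Fm. -/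
open Matrix

lemma aux_posDef {ι κ : Type*} [Fintype ι] [DecidableEq ι] [Fintype κ]
    (α β : ℝ) (hα : 0 < α) (hβ : 0 < β) (F : Matrix κ ι ℝ) :
    (α • (1 : Matrix ι ι ℝ) + β • (Fᵀ * F)).PosDef := by
  have hsemi : (Fᵀ * F).PosSemidef := by
    simpa using Matrix.posSemidef_conjTranspose_mul_self F
  refine posDef_iff_dotProduct_mulVec.mpr ⟨?_, ?_⟩
  · unfold Matrix.IsHermitian
    rw [conjTranspose_add, conjTranspose_smul, conjTranspose_smul, conjTranspose_one,
      hsemi.isHermitian.eq]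
    simp
  · intro x hx
    rw [add_mulVec, dotProduct_add, smul_mulVec, smul_mulVec, one_mulVec,
      dotProduct_smul, dotProduct_smul, smul_eq_mul, smul_eq_mul]
    refine add_pos_of_pos_of_nonneg (mul_pos hα ?_) (mul_nonneg hβ.le (hsemi.dotProduct_mulVec_nonneg x))
    exact Matrix.dotProduct_star_self_pos_iff.mpr hx

theorem duplicated_features_m_relation (n D q : ℕ) (hq : 0 < q)
    (F : Matrix (Fin n) (Fin D) ℝ) (y : Fin n → ℝ)
    (Ftil : Matrix (Fin n) (Fin q × Fin D) ℝ)
    (hFtil : Ftil = Matrix.of fun i p => F i p.2)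
    (α β : ℝ) (hα : 0 < α) (hβ : 0 < β) :
    let A := α • (1 : Matrix (Fin D) (Fin D) ℝ) + β • (Fᵀ * F)
    let m := β • (A⁻¹ *ᵥ (Fᵀ *ᵥ y))
    let Atil := (q * α) • (1 : Matrix (Fin q × Fin D) (Fin q × Fin D) ℝ) +
      β • (Ftilᵀ * Ftil)
    let mtil := β • (Atil⁻¹ *ᵥ (Ftilᵀ *ᵥ y))
    (∀ p : Fin q × Fin D, mtil p = m p.2 / q) ∧
      mtil ⬝ᵥ mtil = (m ⬝ᵥ m) / q ∧
      Ftil *ᵥ mtil = F *ᵥ m := by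
  intro A m Atil mtil
  have hqR : (0:ℝ) < q := by exact_mod_cast hq
  have hqne : (q:ℝ) ≠ 0 := hqR.ne'
  have hApd : A.PosDef := aux_posDef α β hα hβ F
  have hAtpd : Atil.PosDef := by
    subst hFtil
    exact aux_posDef (q * α) β (by positivity) hβ _
  have hAdet : IsUnit A.det := (Matrix.isUnit_iff_isUnit_det A).mp hApd.isUnit
  have hAtdet : IsUnit Atil.det := (Matrix.isUnit_iff_isUnit_det Atil).mp hAtpd.isUnit
  -- m satisfies A *ᵥ m = β • (Fᵀ *ᵥ y)
  have hm : A *ᵥ m = β • (Fᵀ *ᵥ y) := by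
    show A *ᵥ (β • (A⁻¹ *ᵥ (Fᵀ *ᵥ y))) = _
    rw [mulVec_smul, mulVec_mulVec, Matrix.mul_nonsing_inv _ hAdet, one_mulVec]
  set v : Fin q × Fin D → ℝ := fun p => m p.2 / q with hvdef
  -- key linear equation
  have hv : Atil *ᵥ v = β • (Ftilᵀ *ᵥ y) := by
    funext p
    have hmp := congrFun hm p.2
    have hexp : (A *ᵥ m) p.2 = α * m p.2 + β * ((Fᵀ * F) *ᵥ m) p.2 := by
      show ((α • (1 : Matrix (Fin D) (Fin D) ℝ) + β • (Fᵀ * F)) *ᵥ m) p.2 = _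
      rw [add_mulVec, smul_mulVec, smul_mulVec, one_mulVec]
      simp
    have hGG : ((Ftilᵀ * Ftil) *ᵥ v) p = ((Fᵀ * F) *ᵥ m) p.2 := by
      subst hFtil
      simp only [mulVec, dotProduct, Matrix.mul_apply, transpose_apply, of_apply,
        Fintype.sum_prod_type, hvdef]
      rw [Finset.sum_const, Finset.card_univ, Fintype.card_fin, nsmul_eq_mul]
      rw [Finset.mul_sum]
      refine Finset.sum_congr rfl fun k _ => ?_
      field_simp
    have hGy : (Ftilᵀ *ᵥ y) p = (Fᵀ *ᵥ y) p.2 := by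
      subst hFtil
      simp [mulVec, dotProduct]
    show (((↑q * α) • (1 : Matrix (Fin q × Fin D) (Fin q × Fin D) ℝ)
        + β • (Ftilᵀ * Ftil)) *ᵥ v) p = (β • (Ftilᵀ *ᵥ y)) p
    rw [add_mulVec, Pi.add_apply, smul_mulVec, smul_mulVec, one_mulVec, Pi.smul_apply,
      Pi.smul_apply, hGG, Pi.smul_apply, hGy, smul_eq_mul, smul_eq_mul, smul_eq_mul]
    have hmp' : α * m p.2 + β * ((Fᵀ * F) *ᵥ m) p.2 = β * (Fᵀ *ᵥ y) p.2 := by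
      rw [← hexp, hmp, Pi.smul_apply, smul_eq_mul]
    rw [← hmp', hvdef]
    field_simp
  have key : mtil = v := by
    have h1 : mtil = Atil⁻¹ *ᵥ (β • (Ftilᵀ *ᵥ y)) := (Atil⁻¹.mulVec_smul _ _).symm
    rw [h1, ← hv, mulVec_mulVec, Matrix.nonsing_inv_mul _ hAtdet, one_mulVec]
  refine ⟨fun p => by rw [key], ?_, ?_⟩
  · rw [key]
    simp only [dotProduct, hvdef, Fintype.sum_prod_type, div_mul_div_comm,
      ← Finset.sum_div, Finset.sum_const, Finset.card_univ, Fintype.card_fin, nsmul_eq_mul]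
    field_simp
  · rw [key]
    subst hFtil
    funext i
    simp only [mulVec, dotProduct, of_apply, hvdef, Fintype.sum_prod_type]
    rw [Finset.sum_const, Finset.card_univ, Fintype.card_fin, nsmul_eq_mul, Finset.mul_sum]
    refine Finset.sum_congr rfl fun k _ => ?_
    field_simp
end
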